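/- Let S1, S2, W1, Y1 be finite-valued random variables on a common probability space such that (i) S1 is independent of the pair (S2, W1), (ii) X1 = φ1(S1) and X2 = φ2(S2) are deterministic functions of S1 and S2 respectively, and (iii) I(S1, S2, W1; Y1 | X1, X2) = 0 (the output Y1 depends on everything only through the inputs (X1, X2)). Then I(X1, X2; Y1) ≥ H(S1) + H(S2 | W1) − H(S1, S2 | Y1, W1). -/
import Mathlib


open scoped BigOperators Classical

noncomputable section

/-- Probability that the random variable `X` equals `a`, under the pmf `μ`
on the finite sample space `Ω`. -/
def prD {Ω α : Type} [Fintype Ω] (μ : Ω → ℝ) (X : Ω → α) (a : α) : ℝ :=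
  ∑ ω, if X ω = a then μ ω else 0

/-- Shannon entropy (in nats) of the random variable `X` under the pmf `μ`. -/
def ent {Ω α : Type} [Fintype Ω] [Fintype α] (μ : Ω → ℝ) (X : Ω → α) : ℝ :=
  -∑ a, prD μ X a * Real.log (prD μ X a)

/-- Conditional entropy `H(X | Y)` under the pmf `μ`. -/
def condEnt {Ω α β : Type} [Fintype Ω] [Fintype α] [Fintype β]
    (μ : Ω → ℝ) (X : Ω → α) (Y : Ω → β) : ℝ :=
  ent μ (fun ω => (X ω, Y ω)) - ent μ Y

/-- Mutual information `I(X ; Y)` under the pmf `μ`. -/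
def mutInf {Ω α β : Type} [Fintype Ω] [Fintype α] [Fintype β]
    (μ : Ω → ℝ) (X : Ω → α) (Y : Ω → β) : ℝ :=
  ent μ X + ent μ Y - ent μ (fun ω => (X ω, Y ω))

/-- Conditional mutual information `I(X ; Y | Z)` under the pmf `μ`. -/
def condMutInf {Ω α β γ : Type} [Fintype Ω] [Fintype α] [Fintype β] [Fintype γ]
    (μ : Ω → ℝ) (X : Ω → α) (Y : Ω → β) (Z : Ω → γ) : ℝ :=
  condEnt μ X Z - condEnt μ X (fun ω => (Y ω, Z ω))

/-- `p` is a probability mass function on the finite type `α`. -/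
def IsPmf {α : Type} [Fintype α] (p : α → ℝ) : Prop :=
  (∀ a, 0 ≤ p a) ∧ ∑ a, p a = 1


set_option linter.unusedSectionVars false
section aux
variable {Ω α β : Type} [Fintype Ω] [Fintype α] [Fintype β]

lemma prD_nonneg (μ : Ω → ℝ) (hμ : ∀ ω, 0 ≤ μ ω) (X : Ω → α) (a : α) : 0 ≤ prD μ X a := by
  refine Finset.sum_nonneg fun ω _ => ?_
  split <;> simp [hμ ω]

lemma prD_sum (μ : Ω → ℝ) (X : Ω → α) : ∑ a, prD μ X a = ∑ ω, μ ω := by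
  simp only [prD]; rw [Finset.sum_comm]; simp [Finset.sum_ite_eq]

lemma prD_fst (μ : Ω → ℝ) (X : Ω → α) (Y : Ω → β) (a : α) :
    ∑ b, prD μ (fun ω => (X ω, Y ω)) (a, b) = prD μ X a := by
  simp only [prD]; rw [Finset.sum_comm]
  refine Finset.sum_congr rfl fun ω _ => ?_
  by_cases h : X ω = a <;> simp [h, Prod.ext_iff, Finset.sum_ite_eq]

lemma prD_snd (μ : Ω → ℝ) (X : Ω → α) (Y : Ω → β) (b : β) :
    ∑ a, prD μ (fun ω => (X ω, Y ω)) (a, b) = prD μ Y b := by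
  simp only [prD]; rw [Finset.sum_comm]
  refine Finset.sum_congr rfl fun ω _ => ?_
  by_cases h : Y ω = b <;> simp [h, Prod.ext_iff, Finset.sum_ite_eq]

lemma ent_comp (μ : Ω → ℝ) {γ : Type} [Fintype γ] (f : α → γ) (hf : Function.Injective f)
    (X : Ω → α) : ent μ (fun ω => f (X ω)) = ent μ X := by
  have hoff : ∀ b, b ∉ Finset.univ.image f → prD μ (fun ω => f (X ω)) b = 0 := by
    intro b hb
    refine Finset.sum_eq_zero fun ω _ => ?_
    rw [if_neg]
    intro hh
    exact hb (Finset.mem_image.mpr ⟨X ω, Finset.mem_univ _, hh⟩)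
  have hin : ∀ a, prD μ (fun ω => f (X ω)) (f a) = prD μ X a := by
    intro a
    refine Finset.sum_congr rfl fun ω _ => ?_
    simp [hf.eq_iff]
  unfold ent
  congr 1
  rw [← Finset.sum_subset (Finset.subset_univ (Finset.univ.image f))
    (fun b _ hb => by rw [hoff b hb]; simp)]
  rw [Finset.sum_image (fun a _ a' _ hh => hf hh)]
  exact Finset.sum_congr rfl fun a _ => by rw [hin a]

lemma mul_log_mul (x y : ℝ) :
    x * y * Real.log (x * y) = x * y * Real.log x + x * y * Real.log y := by
  by_cases hx : x = 0
  · simp [hx]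
  by_cases hy : y = 0
  · simp [hy]
  rw [Real.log_mul hx hy]; ring

lemma ent_pair_of_indep (μ : Ω → ℝ) (hμ : IsPmf μ) (X : Ω → α) (Y : Ω → β)
    (h : ∀ a b, prD μ (fun ω => (X ω, Y ω)) (a, b) = prD μ X a * prD μ Y b) :
    ent μ (fun ω => (X ω, Y ω)) = ent μ X + ent μ Y := by
  have hq1 : ∑ a, prD μ X a = 1 := by rw [prD_sum]; exact hμ.2
  have hr1 : ∑ b, prD μ Y b = 1 := by rw [prD_sum]; exact hμ.2
  unfold ent
  rw [Fintype.sum_prod_type]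
  have : ∀ a b, prD μ (fun ω => (X ω, Y ω)) (a, b) *
      Real.log (prD μ (fun ω => (X ω, Y ω)) (a, b)) =
      prD μ X a * prD μ Y b * Real.log (prD μ X a) +
      prD μ X a * prD μ Y b * Real.log (prD μ Y b) := by
    intro a b; rw [h a b, mul_log_mul]
  simp only [this]
  rw [show (∑ a, ∑ b, (prD μ X a * prD μ Y b * Real.log (prD μ X a) +
      prD μ X a * prD μ Y b * Real.log (prD μ Y b))) =
      (∑ a, prD μ X a * Real.log (prD μ X a) * (∑ b, prD μ Y b)) +
      (∑ a, prD μ X a) * (∑ b, prD μ Y b * Real.log (prD μ Y b)) by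
    rw [Finset.sum_mul]
    rw [← Finset.sum_add_distrib]
    refine Finset.sum_congr rfl fun a _ => ?_
    rw [Finset.mul_sum, Finset.mul_sum, ← Finset.sum_add_distrib]
    refine Finset.sum_congr rfl fun b _ => by ring]
  rw [hq1, hr1]; ring

lemma gibbs_pt (p s : ℝ) (hp : 0 ≤ p) (hs : 0 ≤ s) (hps : p ≠ 0 → s ≠ 0) :
    p * Real.log s - p * Real.log p ≤ s - p := by
  rcases eq_or_lt_of_le hp with hp0 | hp0
  · simp [← hp0, hs]
  have hs0 : 0 < s := lt_of_le_of_ne hs (Ne.symm (hps (ne_of_gt hp0)))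
  have := Real.log_le_sub_one_of_pos (show (0:ℝ) < s / p from div_pos hs0 hp0)
  rw [Real.log_div (ne_of_gt hs0) (ne_of_gt hp0)] at this
  have h2 : p * (Real.log s - Real.log p) ≤ p * (s / p - 1) :=
    mul_le_mul_of_nonneg_left this hp
  rw [mul_sub, mul_sub, mul_div_cancel₀ _ (ne_of_gt hp0)] at h2
  linarith

lemma ent_pair_le (μ : Ω → ℝ) (hμ : IsPmf μ) (X : Ω → α) (Y : Ω → β) :
    ent μ (fun ω => (X ω, Y ω)) ≤ ent μ X + ent μ Y := by
  set p := prD μ (fun ω => (X ω, Y ω)) with hp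
  set q := prD μ X with hq
  set r := prD μ Y with hr
  have hp0 : ∀ ab, 0 ≤ p ab := prD_nonneg μ hμ.1 _
  have hq0 : ∀ a, 0 ≤ q a := prD_nonneg μ hμ.1 _
  have hr0 : ∀ b, 0 ≤ r b := prD_nonneg μ hμ.1 _
  have hq1 : ∑ a, q a = 1 := by rw [hq, prD_sum]; exact hμ.2
  have hr1 : ∑ b, r b = 1 := by rw [hr, prD_sum]; exact hμ.2
  have hm1 : ∀ a, q a = ∑ b, p (a, b) := fun a => (prD_fst μ X Y a).symm
  have hm2 : ∀ b, r b = ∑ a, p (a, b) := fun b => (prD_snd μ X Y b).symm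
  have hp1 : ∑ a, ∑ b, p (a, b) = 1 := by
    rw [show (∑ a, ∑ b, p (a, b)) = ∑ a, q a from
      Finset.sum_congr rfl fun a _ => (hm1 a).symm, hq1]
  have hpq : ∀ a b, p (a, b) ≤ q a := fun a b => by
    rw [hm1 a]
    exact Finset.single_le_sum (f := fun b' => p (a, b')) (fun b' _ => hp0 _) (Finset.mem_univ b)
  have hpr : ∀ a b, p (a, b) ≤ r b := fun a b => by
    rw [hm2 b]
    exact Finset.single_le_sum (f := fun a' => p (a', b)) (fun a' _ => hp0 _) (Finset.mem_univ a)
  -- reduce to sums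
  have e1 : ∑ a, q a * Real.log (q a) = ∑ a, ∑ b, p (a, b) * Real.log (q a) := by
    refine Finset.sum_congr rfl fun a _ => ?_
    rw [hm1 a, Finset.sum_mul]
  have e2 : ∑ b, r b * Real.log (r b) = ∑ a, ∑ b, p (a, b) * Real.log (r b) := by
    rw [Finset.sum_comm]
    refine Finset.sum_congr rfl fun b _ => ?_
    rw [hm2 b, Finset.sum_mul]
  have e3 : ∀ a b, p (a, b) * Real.log (q a) + p (a, b) * Real.log (r b)
      = p (a, b) * Real.log (q a * r b) := by
    intro a b
    by_cases hz : p (a, b) = 0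
    · simp [hz]
    have hqz : q a ≠ 0 := fun hc =>
      hz (le_antisymm (hc ▸ hpq a b) (hp0 _))
    have hrz : r b ≠ 0 := fun hc =>
      hz (le_antisymm (hc ▸ hpr a b) (hp0 _))
    rw [Real.log_mul hqz hrz]; ring
  have key : ∑ a, ∑ b, (p (a, b) * Real.log (q a * r b) - p (a, b) * Real.log (p (a, b)))
      ≤ ∑ a, ∑ b, (q a * r b - p (a, b)) := by
    refine Finset.sum_le_sum fun a _ => Finset.sum_le_sum fun b _ => ?_
    refine gibbs_pt _ _ (hp0 _) (mul_nonneg (hq0 _) (hr0 _)) fun hz => ?_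
    have hpz : 0 < p (a, b) := lt_of_le_of_ne (hp0 _) (Ne.symm hz)
    exact ne_of_gt (mul_pos (lt_of_lt_of_le hpz (hpq a b))
      (lt_of_lt_of_le hpz (hpr a b)))
  have rhs0 : ∑ a, ∑ b, (q a * r b - p (a, b)) = 0 := by
    simp only [Finset.sum_sub_distrib]
    rw [hp1]
    rw [show (∑ a, ∑ b, q a * r b) = (∑ a, q a) * (∑ b, r b) by
      rw [Finset.sum_mul]
      exact Finset.sum_congr rfl fun a _ => by rw [Finset.mul_sum]]
    rw [hq1, hr1]; ring
  unfold ent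
  rw [Fintype.sum_prod_type]
  have final : ∑ a, ∑ b, p (a, b) * Real.log (q a * r b)
      - ∑ a, ∑ b, p (a, b) * Real.log (p (a, b)) ≤ 0 := by
    rw [← Finset.sum_sub_distrib]
    simp only [← Finset.sum_sub_distrib]
    calc _ ≤ ∑ a, ∑ b, (q a * r b - p (a, b)) := key
      _ = 0 := rhs0
  have e4 : ∑ a, ∑ b, p (a, b) * Real.log (q a * r b)
      = ∑ a, ∑ b, p (a, b) * Real.log (q a) + ∑ a, ∑ b, p (a, b) * Real.log (r b) := by
    rw [← Finset.sum_add_distrib]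
    refine Finset.sum_congr rfl fun a _ => ?_
    rw [← Finset.sum_add_distrib]
    exact Finset.sum_congr rfl fun b _ => (e3 a b).symm
  rw [e4, ← e1, ← e2] at final
  linarith

end aux

/-- If (i) `S1` is independent of the pair `(S2, W1)`, (ii) `X1 = φ1(S1)`
and `X2 = φ2(S2)` are deterministic functions of the sources, and (iii)
`I(S1,S2,W1; Y1 | X1,X2) = 0` (the output depends on everything only through the
inputs), then `I(X1,X2; Y1) ≥ H(S1) + H(S2|W1) − H(S1,S2|Y1,W1)`. -/
theorem cmac_independent_pairs_converse_sum_rate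
    {Ω S1t S2t W1t X1t X2t Y1t : Type}
    [Fintype Ω] [Fintype S1t] [Fintype S2t] [Fintype W1t]
    [Fintype X1t] [Fintype X2t] [Fintype Y1t]
    (μ : Ω → ℝ) (hμ : IsPmf μ)
    (S1 : Ω → S1t) (S2 : Ω → S2t) (W1 : Ω → W1t) (Y1 : Ω → Y1t)
    (φ1 : S1t → X1t) (φ2 : S2t → X2t)
    (hInd : ∀ (a : S1t) (bc : S2t × W1t),
      prD μ (fun ω => (S1 ω, (S2 ω, W1 ω))) (a, bc) =
        prD μ S1 a * prD μ (fun ω => (S2 ω, W1 ω)) bc)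
    (h : condMutInf μ (fun ω => (S1 ω, S2 ω, W1 ω)) Y1
      (fun ω => (φ1 (S1 ω), φ2 (S2 ω))) = 0) :
    ent μ S1 + condEnt μ S2 W1 -
        condEnt μ (fun ω => (S1 ω, S2 ω)) (fun ω => (Y1 ω, W1 ω)) ≤
      mutInf μ (fun ω => (φ1 (S1 ω), φ2 (S2 ω))) Y1 := by
  -- abbreviations
  have hg : Function.Injective
      (fun a : S1t × S2t × W1t => (a, (φ1 a.1, φ2 a.2.1))) :=
    fun x y hxy => (Prod.ext_iff.mp hxy).1
  -- T1 : ent (A, X) = ent A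
  have T1 : ent μ (fun ω => ((S1 ω, S2 ω, W1 ω), (φ1 (S1 ω), φ2 (S2 ω))))
      = ent μ (fun ω => (S1 ω, S2 ω, W1 ω)) :=
    ent_comp μ _ hg (fun ω => (S1 ω, S2 ω, W1 ω))
  -- T2 : ent (A, (Y1, X)) = ent (A, Y1)
  have hf2 : Function.Injective
      (fun ay : (S1t × S2t × W1t) × Y1t => (ay.1, (ay.2, (φ1 ay.1.1, φ2 ay.1.2.1)))) := by
    rintro ⟨⟨a, b, c⟩, y⟩ ⟨⟨a', b', c'⟩, y'⟩ hxy
    simp only [Prod.ext_iff] at hxy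
    simp_all
  have T2 : ent μ (fun ω => ((S1 ω, S2 ω, W1 ω), (Y1 ω, (φ1 (S1 ω), φ2 (S2 ω)))))
      = ent μ (fun ω => ((S1 ω, S2 ω, W1 ω), Y1 ω)) :=
    ent_comp μ _ hf2 (fun ω => ((S1 ω, S2 ω, W1 ω), Y1 ω))
  -- T3 : ent (Y1, X) = ent (X, Y1)
  have T3 : ent μ (fun ω => (Y1 ω, (φ1 (S1 ω), φ2 (S2 ω))))
      = ent μ (fun ω => ((φ1 (S1 ω), φ2 (S2 ω)), Y1 ω)) :=
    ent_comp μ Prod.swap Prod.swap_injective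
      (fun ω => ((φ1 (S1 ω), φ2 (S2 ω)), Y1 ω))
  -- T4 : ent ((S1,S2),(Y1,W1)) = ent (A, Y1)
  have hf4 : Function.Injective
      (fun ay : (S1t × S2t × W1t) × Y1t =>
        ((ay.1.1, ay.1.2.1), (ay.2, ay.1.2.2))) := by
    rintro ⟨⟨a, b, c⟩, y⟩ ⟨⟨a', b', c'⟩, y'⟩ hxy
    simp only [Prod.ext_iff] at hxy
    obtain ⟨⟨h1, h2⟩, h3, h4⟩ := hxy
    simp_all
  have T4 : ent μ (fun ω => ((S1 ω, S2 ω), (Y1 ω, W1 ω)))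
      = ent μ (fun ω => ((S1 ω, S2 ω, W1 ω), Y1 ω)) :=
    ent_comp μ _ hf4 (fun ω => ((S1 ω, S2 ω, W1 ω), Y1 ω))
  -- T5 : independence
  have T5 : ent μ (fun ω => (S1 ω, (S2 ω, W1 ω)))
      = ent μ S1 + ent μ (fun ω => (S2 ω, W1 ω)) :=
    ent_pair_of_indep μ hμ S1 (fun ω => (S2 ω, W1 ω)) hInd
  -- T6 : subadditivity
  have T6 : ent μ (fun ω => (Y1 ω, W1 ω)) ≤ ent μ Y1 + ent μ W1 :=
    ent_pair_le μ hμ Y1 W1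
  simp only [condMutInf, condEnt, mutInf] at h ⊢
  rw [T1, T2, T3] at h
  rw [T4]
  have T5' : ent μ (fun ω => (S1 ω, S2 ω, W1 ω))
      = ent μ S1 + ent μ (fun ω => (S2 ω, W1 ω)) := T5
  linarith
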